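/- arXiv:1507.00266 — 4 statements merged into one kernel-verified Lean document; each statement's English description precedes it below -/
import Mathlib

section
/- The function Z : GL⁺(2) → [1,∞) defined by Z(F) = ‖F‖_op² / det F, where ‖F‖_op denotes the operator norm of F induced by the Euclidean norm on ℝ² (i.e. the largest singular value of F), is polyconvex on GL⁺(2). -/
open Matrix Set

noncomputable section

/-- The space of real 2×2 matrices. -/
abbrev Mat2 : Type := Matrix (Fin 2) (Fin 2) ℝ

/-- The special orthogonal group SO(2): orthogonal 2×2 matrices with determinant 1. -/
def SO2 : Set Mat2 := {Q : Mat2 | Qᵀ * Q = 1 ∧ Q.det = 1}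

/-- A function `W` (viewed on GL⁺(2) = {F | 0 < det F}) is polyconvex if there is a
convex function `P : ℝ^{2×2} × ℝ → ℝ ∪ {+∞}` with `W F = P (F, det F)` on GL⁺(2). -/
def Polyconvex (W : Mat2 → ℝ) : Prop :=
  ∃ P : Mat2 × ℝ → EReal,
    (∀ x y : Mat2 × ℝ, ∀ a b : ℝ, 0 ≤ a → 0 ≤ b → a + b = 1 →
      P (a • x + b • y) ≤ (a : EReal) * P x + (b : EReal) * P y) ∧
    (∀ F : Mat2, 0 < F.det → (W F : EReal) = P (F, F.det))

/-- Rank-one convexity of `W` on GL⁺(2): convexity along rank-one line segments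
lying in GL⁺(2). -/
def RankOneConvex (W : Mat2 → ℝ) : Prop :=
  ∀ F : Mat2, 0 < F.det → ∀ ξ η : Fin 2 → ℝ, ∀ θ : ℝ, θ ∈ Set.Icc (0:ℝ) 1 →
    (∀ t ∈ Set.Icc (0:ℝ) 1, 0 < (F + t • vecMulVec ξ η).det) →
    W (F + (1 - θ) • vecMulVec ξ η) ≤ θ * W F + (1 - θ) * W (F + vecMulVec ξ η)

/-- Objectivity and isotropy: bi-SO(2)-invariance on GL⁺(2). -/
def ObjectiveIsotropic (W : Mat2 → ℝ) : Prop :=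
  ∀ F : Mat2, 0 < F.det → ∀ Q₁ Q₂ : Mat2, Q₁ ∈ SO2 → Q₂ ∈ SO2 →
    W (Q₁ * F * Q₂) = W F

/-- Isochoric: invariance under positive scaling on GL⁺(2). -/
def Isochoric (W : Mat2 → ℝ) : Prop :=
  ∀ F : Mat2, 0 < F.det → ∀ a : ℝ, 0 < a → W (a • F) = W F

/-- The 2×2 diagonal matrix diag(a, b). -/
def diag2 (a b : ℝ) : Mat2 := !![a, 0; 0, b]

/-- The squared Frobenius norm of a 2×2 matrix. -/
def frobSq (F : Mat2) : ℝ := ∑ i, ∑ j, (F i j) ^ 2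

/-- The operator norm of `F` induced by the Euclidean norm on ℝ²:
the supremum of ‖F·x‖ over Euclidean-unit vectors x. -/
def opNorm2 (F : Mat2) : ℝ :=
  sSup {r : ℝ | ∃ x : Fin 2 → ℝ, (x 0) ^ 2 + (x 1) ^ 2 = 1 ∧
    r = Real.sqrt ((F.mulVec x 0) ^ 2 + (F.mulVec x 1) ^ 2)}

namespace OpAux

def S (F : Mat2) : Set ℝ :=
  {r : ℝ | ∃ x : Fin 2 → ℝ, (x 0) ^ 2 + (x 1) ^ 2 = 1 ∧
    r = Real.sqrt ((F.mulVec x 0) ^ 2 + (F.mulVec x 1) ^ 2)}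

lemma opNorm2_eq (F : Mat2) : opNorm2 F = sSup (S F) := rfl

lemma mulVec_apply (F : Mat2) (x : Fin 2 → ℝ) (i : Fin 2) :
    F.mulVec x i = F i 0 * x 0 + F i 1 * x 1 := by
  simp [Matrix.mulVec, dotProduct, Fin.sum_univ_two]

lemma S_nonempty (F : Mat2) : (S F).Nonempty := by
  refine ⟨_, ![1, 0], by norm_num, rfl⟩

lemma S_bddAbove (F : Mat2) : BddAbove (S F) := by
  refine ⟨Real.sqrt (frobSq F), ?_⟩
  rintro r ⟨x, hx, rfl⟩
  apply Real.sqrt_le_sqrt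
  rw [mulVec_apply, mulVec_apply]
  simp only [frobSq, Fin.sum_univ_two]
  nlinarith [sq_nonneg (F 0 0 * x 1 - F 0 1 * x 0), sq_nonneg (F 1 0 * x 1 - F 1 1 * x 0),
    sq_nonneg (F 0 0), sq_nonneg (F 0 1), sq_nonneg (F 1 0), sq_nonneg (F 1 1)]

lemma unit_le (F : Mat2) {x : Fin 2 → ℝ} (hx : (x 0) ^ 2 + (x 1) ^ 2 = 1) :
    Real.sqrt ((F.mulVec x 0) ^ 2 + (F.mulVec x 1) ^ 2) ≤ opNorm2 F :=
  le_csSup (S_bddAbove F) ⟨x, hx, rfl⟩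

lemma opNorm2_le (F : Mat2) (M : ℝ)
    (h : ∀ x : Fin 2 → ℝ, (x 0) ^ 2 + (x 1) ^ 2 = 1 →
      Real.sqrt ((F.mulVec x 0) ^ 2 + (F.mulVec x 1) ^ 2) ≤ M) :
    opNorm2 F ≤ M := by
  apply csSup_le (S_nonempty F)
  rintro r ⟨x, hx, rfl⟩
  exact h x hx

lemma opNorm2_nonneg (F : Mat2) : 0 ≤ opNorm2 F := by
  have h := unit_le F (x := ![1, 0]) (by norm_num)
  exact le_trans (Real.sqrt_nonneg _) h

lemma dot_le_sqrt (u0 u1 v0 v1 : ℝ) :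
    u0 * v0 + u1 * v1 ≤ Real.sqrt (u0 ^ 2 + u1 ^ 2) * Real.sqrt (v0 ^ 2 + v1 ^ 2) := by
  rw [← Real.sqrt_mul (by positivity)]
  rcases le_or_gt (u0 * v0 + u1 * v1) 0 with h | h
  · exact h.trans (Real.sqrt_nonneg _)
  · rw [Real.le_sqrt h.le (by positivity)]
    nlinarith [sq_nonneg (u0 * v1 - u1 * v0)]

lemma cross_le_sqrt (u0 u1 v0 v1 : ℝ) :
    u0 * v1 - u1 * v0 ≤ Real.sqrt (u0 ^ 2 + u1 ^ 2) * Real.sqrt (v0 ^ 2 + v1 ^ 2) := by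
  rw [← Real.sqrt_mul (by positivity)]
  rcases le_or_gt (u0 * v1 - u1 * v0) 0 with h | h
  · exact h.trans (Real.sqrt_nonneg _)
  · rw [Real.le_sqrt h.le (by positivity)]
    nlinarith [sq_nonneg (u0 * v0 + u1 * v1)]

lemma det_le_sq (F : Mat2) : F.det ≤ (opNorm2 F) ^ 2 := by
  have h0 := unit_le F (x := ![1, 0]) (by norm_num)
  have h1 := unit_le F (x := ![0, 1]) (by norm_num)
  rw [mulVec_apply, mulVec_apply] at h0 h1
  simp only [Matrix.cons_val_zero, Matrix.cons_val_one, Matrix.head_cons] at h0 h1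
  norm_num at h0 h1
  have hc := cross_le_sqrt (F 0 0) (F 1 0) (F 0 1) (F 1 1)
  have hmul : Real.sqrt (F 0 0 ^ 2 + F 1 0 ^ 2) * Real.sqrt (F 0 1 ^ 2 + F 1 1 ^ 2)
      ≤ opNorm2 F * opNorm2 F :=
    mul_le_mul h0 h1 (Real.sqrt_nonneg _) (opNorm2_nonneg F)
  rw [Matrix.det_fin_two]
  nlinarith

lemma triangle (a b : ℝ) (ha : 0 ≤ a) (hb : 0 ≤ b) (u0 u1 v0 v1 : ℝ) :
    Real.sqrt ((a * u0 + b * v0) ^ 2 + (a * u1 + b * v1) ^ 2)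
      ≤ a * Real.sqrt (u0 ^ 2 + u1 ^ 2) + b * Real.sqrt (v0 ^ 2 + v1 ^ 2) := by
  set A := Real.sqrt (u0 ^ 2 + u1 ^ 2) with hA
  set B := Real.sqrt (v0 ^ 2 + v1 ^ 2) with hB
  have hA2 : A ^ 2 = u0 ^ 2 + u1 ^ 2 := Real.sq_sqrt (by positivity)
  have hB2 : B ^ 2 = v0 ^ 2 + v1 ^ 2 := Real.sq_sqrt (by positivity)
  have hAn : 0 ≤ A := Real.sqrt_nonneg _
  have hBn : 0 ≤ B := Real.sqrt_nonneg _
  have hdot := dot_le_sqrt u0 u1 v0 v1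
  rw [← hA, ← hB] at hdot
  have hrhs : 0 ≤ a * A + b * B := by positivity
  rw [show a * A + b * B = Real.sqrt ((a * A + b * B) ^ 2) from (Real.sqrt_sq hrhs).symm]
  apply Real.sqrt_le_sqrt
  have h2 : 2 * (a * b) * (u0 * v0 + u1 * v1) ≤ 2 * (a * b) * (A * B) :=
    mul_le_mul_of_nonneg_left hdot (by positivity)
  calc (a * u0 + b * v0) ^ 2 + (a * u1 + b * v1) ^ 2
      = a ^ 2 * (u0 ^ 2 + u1 ^ 2) + b ^ 2 * (v0 ^ 2 + v1 ^ 2)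
        + 2 * (a * b) * (u0 * v0 + u1 * v1) := by ring
    _ ≤ a ^ 2 * (u0 ^ 2 + u1 ^ 2) + b ^ 2 * (v0 ^ 2 + v1 ^ 2)
        + 2 * (a * b) * (A * B) := by linarith
    _ = (a * A + b * B) ^ 2 := by rw [← hA2, ← hB2]; ring

lemma opNorm2_convex (a b : ℝ) (ha : 0 ≤ a) (hb : 0 ≤ b) (F G : Mat2) :
    opNorm2 (a • F + b • G) ≤ a * opNorm2 F + b * opNorm2 G := by
  apply opNorm2_le
  intro x hx
  have hm : ∀ i, (a • F + b • G).mulVec x i = a * F.mulVec x i + b * G.mulVec x i := by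
    intro i
    rw [mulVec_apply, mulVec_apply, mulVec_apply]
    simp [Matrix.add_apply, Matrix.smul_apply, smul_eq_mul]
    ring
  rw [hm 0, hm 1]
  calc Real.sqrt ((a * F.mulVec x 0 + b * G.mulVec x 0) ^ 2
        + (a * F.mulVec x 1 + b * G.mulVec x 1) ^ 2)
      ≤ a * Real.sqrt ((F.mulVec x 0) ^ 2 + (F.mulVec x 1) ^ 2)
        + b * Real.sqrt ((G.mulVec x 0) ^ 2 + (G.mulVec x 1) ^ 2) :=
        triangle a b ha hb _ _ _ _
    _ ≤ a * opNorm2 F + b * opNorm2 G :=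
        add_le_add (mul_le_mul_of_nonneg_left (unit_le F hx) ha)
          (mul_le_mul_of_nonneg_left (unit_le G hx) hb)

lemma key (a b d1 d2 n1 n2 n : ℝ) (ha : 0 < a) (hb : 0 < b) (hd1 : 0 < d1) (hd2 : 0 < d2)
    (hn0 : 0 ≤ n) (hn1 : 0 ≤ n1) (hn2 : 0 ≤ n2) (hn : n ≤ a * n1 + b * n2) :
    n ^ 2 / (a * d1 + b * d2) ≤ a * (n1 ^ 2 / d1) + b * (n2 ^ 2 / d2) := by
  have h1 : a * (n1 ^ 2 / d1) + b * (n2 ^ 2 / d2)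
      = (a * n1 ^ 2 * d2 + b * n2 ^ 2 * d1) / (d1 * d2) := by
    field_simp
  rw [h1, div_le_div_iff₀ (by positivity) (by positivity)]
  have hm : n ^ 2 ≤ (a * n1 + b * n2) ^ 2 := by nlinarith
  nlinarith [mul_pos hd1 hd2, mul_nonneg (mul_pos ha hb).le (sq_nonneg (n1 * d2 - n2 * d1))]

def P : Mat2 × ℝ → EReal := fun p =>
  if 0 < p.2 then (((opNorm2 p.1) ^ 2 / p.2 : ℝ) : EReal) else ⊤

lemma P_ne_bot (p : Mat2 × ℝ) : P p ≠ ⊥ := by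
  unfold P
  split
  · exact EReal.coe_ne_bot _
  · simp

lemma coe_mul_P_ne_bot (c : ℝ) (hc : 0 < c) (p : Mat2 × ℝ) : (c : EReal) * P p ≠ ⊥ := by
  unfold P
  split
  · rw [← EReal.coe_mul]; exact EReal.coe_ne_bot _
  · rw [EReal.coe_mul_top_of_pos hc]; simp

end OpAux

/-- The function `Z(F) = ‖F‖_op² / det F` maps GL⁺(2) into `[1,∞)`
and is polyconvex on GL⁺(2). -/
theorem opNormSq_div_det_polyconvex :
    (∀ F : Mat2, 0 < F.det → 1 ≤ (opNorm2 F) ^ 2 / F.det) ∧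
    Polyconvex (fun F => (opNorm2 F) ^ 2 / F.det) := by
  constructor
  · intro F hF
    rw [le_div_iff₀ hF, one_mul]
    exact OpAux.det_le_sq F
  · refine ⟨OpAux.P, ?_, ?_⟩
    · intro x y a b ha hb hab
      rcases ha.eq_or_lt with rfl | ha'
      · have hb1 : b = 1 := by linarith
        subst hb1
        simp only [zero_smul, one_smul, zero_add, EReal.coe_zero, EReal.coe_one,
          zero_mul, one_mul]
        exact le_rfl
      rcases hb.eq_or_lt with rfl | hb'
      · have ha1 : a = 1 := by linarith
        subst ha1
        simp only [zero_smul, one_smul, add_zero, EReal.coe_zero, EReal.coe_one,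
          zero_mul, one_mul]
        exact le_rfl
      obtain ⟨F, d1⟩ := x
      obtain ⟨G, d2⟩ := y
      by_cases hd1 : 0 < d1
      · by_cases hd2 : 0 < d2
        · have hcombo : (a • (F, d1) + b • (G, d2) : Mat2 × ℝ)
              = (a • F + b • G, a * d1 + b * d2) := by
            simp [Prod.ext_iff, smul_eq_mul]
          rw [hcombo]
          have hd : 0 < a * d1 + b * d2 := by positivity
          have hP1 : OpAux.P (F, d1) = (((opNorm2 F) ^ 2 / d1 : ℝ) : EReal) := by
            simp [OpAux.P, hd1]
          have hP2 : OpAux.P (G, d2) = (((opNorm2 G) ^ 2 / d2 : ℝ) : EReal) := by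
            simp [OpAux.P, hd2]
          have hPc : OpAux.P (a • F + b • G, a * d1 + b * d2)
              = (((opNorm2 (a • F + b • G)) ^ 2 / (a * d1 + b * d2) : ℝ) : EReal) := by
            simp [OpAux.P, hd]
          rw [hP1, hP2, hPc, ← EReal.coe_mul, ← EReal.coe_mul, ← EReal.coe_add,
            EReal.coe_le_coe_iff]
          exact OpAux.key a b d1 d2 (opNorm2 F) (opNorm2 G) _ ha' hb' hd1 hd2
            (OpAux.opNorm2_nonneg _) (OpAux.opNorm2_nonneg F) (OpAux.opNorm2_nonneg G)
            (OpAux.opNorm2_convex a b ha hb F G)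
        · have hP2 : OpAux.P (G, d2) = ⊤ := by simp [OpAux.P, hd2]
          rw [hP2, EReal.coe_mul_top_of_pos hb',
            EReal.add_top_of_ne_bot (OpAux.coe_mul_P_ne_bot a ha' _)]
          exact le_top
      · have hP1 : OpAux.P (F, d1) = ⊤ := by simp [OpAux.P, hd1]
        rw [hP1, EReal.coe_mul_top_of_pos ha',
          EReal.top_add_of_ne_bot (OpAux.coe_mul_P_ne_bot b hb' _)]
        exact le_top
    · intro F hF
      simp [OpAux.P, hF]
end
end

section
/- Let W : GL⁺(2) → ℝ and suppose there exists a non-decreasing convex function h : [1,∞) → ℝ such that W(F) = h(‖F‖_op² / det F) for all F ∈ GL⁺(2), where ‖F‖_op denotes the operator norm of F induced by the Euclidean norm on ℝ². Then W is polyconvex. -/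
open Matrix Set

noncomputable section

/-! The convex representative is `P (F, δ) = h (max 1 (‖F‖² / δ))` for `δ > 0` and `P = +∞`
otherwise. The map `(F, δ) ↦ ‖F‖² / δ` is jointly convex on `δ > 0` (the perspective of the
convex function `‖·‖²`, via Sedrakyan's inequality), and `h ∘ max 1` is convex and
non-decreasing on all of `ℝ`, so `P` is convex. Hadamard's inequality `det F ≤ ‖F‖²` shows
that the cutoff at `1` is inactive on GL⁺(2), so `P (F, det F) = W F` there. -/

open scoped Matrix.Norms.L2Operator

section ExtendByTop

variable {E : Type*}

open Classical in
def extendByTop (s : Set E) (f : E → ℝ) (x : E) : EReal := if x ∈ s then f x else ⊤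

lemma extendByTop_of_mem {s : Set E} {f : E → ℝ} {x : E} (hx : x ∈ s) :
    extendByTop s f x = f x := by
  simp [extendByTop, hx]

lemma extendByTop_of_notMem {s : Set E} {f : E → ℝ} {x : E} (hx : x ∉ s) :
    extendByTop s f x = ⊤ := by
  simp [extendByTop, hx]

lemma coe_mul_extendByTop_ne_bot {a : ℝ} (ha : 0 < a) (s : Set E) (f : E → ℝ) (x : E) :
    (a : EReal) * extendByTop s f x ≠ ⊥ := by
  by_cases hx : x ∈ s
  · simp [extendByTop_of_mem hx, ← EReal.coe_mul]
  · rw [extendByTop_of_notMem hx, EReal.mul_top_of_pos (by exact_mod_cast ha)]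
    exact top_ne_bot

theorem ConvexOn.extendByTop_le [AddCommMonoid E] [Module ℝ E] {s : Set E} {f : E → ℝ}
    (hf : ConvexOn ℝ s f) (x y : E) {a b : ℝ} (ha : 0 ≤ a) (hb : 0 ≤ b) (hab : a + b = 1) :
    extendByTop s f (a • x + b • y) ≤ a * extendByTop s f x + b * extendByTop s f y := by
  -- In `EReal`, `0 * ⊤ = 0`, so the endpoint weights must be treated separately.
  rcases ha.eq_or_lt with rfl | ha
  · obtain rfl : b = 1 := by linarith
    simp
  rcases hb.eq_or_lt with rfl | hb
  · obtain rfl : a = 1 := by linarith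
    simp
  by_cases hx : x ∈ s
  · by_cases hy : y ∈ s
    · rw [extendByTop_of_mem hx, extendByTop_of_mem hy,
        extendByTop_of_mem (hf.1 hx hy ha.le hb.le hab), ← EReal.coe_mul, ← EReal.coe_mul,
        ← EReal.coe_add, EReal.coe_le_coe_iff]
      exact hf.2 hx hy ha.le hb.le hab
    · rw [extendByTop_of_notMem hy, EReal.mul_top_of_pos (by exact_mod_cast hb),
        EReal.add_top_of_ne_bot (coe_mul_extendByTop_ne_bot ha s f x)]
      exact le_top
  · rw [extendByTop_of_notMem hx, EReal.mul_top_of_pos (by exact_mod_cast ha),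
      EReal.top_add_of_ne_bot (coe_mul_extendByTop_ne_bot hb s f y)]
    exact le_top

end ExtendByTop

theorem add_sq_div_add_le {p q c d : ℝ} (hc : 0 < c) (hd : 0 < d) :
    (p + q) ^ 2 / (c + d) ≤ p ^ 2 / c + q ^ 2 / d := by
  simpa [Fin.sum_univ_two] using Finset.sq_sum_div_le_sum_sq_div Finset.univ ![p, q]
    (g := ![c, d]) (by simp [Fin.forall_fin_two, hc, hd])

theorem ConvexOn.sq_div {E : Type*} [AddCommMonoid E] [Module ℝ E] {s : Set E} {N : E → ℝ}
    (hN : ConvexOn ℝ s N) (hN₀ : ∀ x ∈ s, 0 ≤ N x) :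
    ConvexOn ℝ (s ×ˢ Ioi 0) (fun p => N p.1 ^ 2 / p.2) := by
  refine convexOn_iff_forall_pos.2 ⟨hN.1.prod (convex_Ioi 0), ?_⟩
  rintro ⟨u, c⟩ ⟨hu, hc : 0 < c⟩ ⟨v, d⟩ ⟨hv, hd : 0 < d⟩ a b ha hb hab
  simp only [Prod.fst_add, Prod.snd_add, Prod.smul_fst, Prod.smul_snd, smul_eq_mul]
  calc N (a • u + b • v) ^ 2 / (a * c + b * d)
      ≤ (a * N u + b * N v) ^ 2 / (a * c + b * d) := by
        gcongr
        · exact hN₀ _ (hN.1 hu hv ha.le hb.le hab)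
        · simpa using hN.2 hu hv ha.le hb.le hab
    _ ≤ (a * N u) ^ 2 / (a * c) + (b * N v) ^ 2 / (b * d) :=
        add_sq_div_add_le (by positivity) (by positivity)
    _ = a * (N u ^ 2 / c) + b * (N v ^ 2 / d) := by field_simp

theorem ConvexOn.monotone_comp {E : Type*} [AddCommMonoid E] [Module ℝ E] {s : Set E}
    {f : E → ℝ} {g : ℝ → ℝ} (hg : ConvexOn ℝ univ g) (hg' : Monotone g)
    (hf : ConvexOn ℝ s f) : ConvexOn ℝ s (g ∘ f) :=
  ⟨hf.1, fun _ hx _ hy _ _ ha hb hab =>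
    (hg' (hf.2 hx hy ha hb hab)).trans (hg.2 trivial trivial ha hb hab)⟩

section CompMax

variable {h : ℝ → ℝ} {c : ℝ}

theorem monotone_comp_max_of_monotoneOn (hmono : MonotoneOn h (Ici c)) :
    Monotone fun x => h (max c x) :=
  fun _ _ hxy => hmono (mem_Ici.2 (le_max_left _ _)) (mem_Ici.2 (le_max_left _ _))
    (max_le_max le_rfl hxy)

theorem convexOn_comp_max_of_monotoneOn (hmono : MonotoneOn h (Ici c))
    (hconv : ConvexOn ℝ (Ici c) h) : ConvexOn ℝ univ fun x => h (max c x) := by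
  refine ⟨convex_univ, fun x _ y _ a b ha hb hab => ?_⟩
  have hx : max c x ∈ Ici c := le_max_left c x
  have hy : max c y ∈ Ici c := le_max_left c y
  have hmax : max c (a • x + b • y) ≤ a • max c x + b • max c y := by
    simpa using (convexOn_const c convex_univ).sup (convexOn_id convex_univ) |>.2
      trivial trivial ha hb hab
  calc h (max c (a • x + b • y)) ≤ h (a • max c x + b • max c y) :=
        hmono (mem_Ici.2 (le_max_left _ _)) (hconv.1 hx hy ha hb hab) hmax
    _ ≤ a • h (max c x) + b • h (max c y) := hconv.2 hx hy ha hb hab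

end CompMax

lemma opNorm2_eq_l2_opNorm (F : Mat2) : opNorm2 F = ‖F‖ := by
  rw [cstar_norm_def, ← ContinuousLinearMap.sSup_sphere_eq_norm, opNorm2]
  congr 1
  ext r
  simp only [mem_image, mem_sphere_zero_iff_norm, EuclideanSpace.norm_eq, Real.norm_eq_abs,
    sq_abs, Fin.sum_univ_two, Real.sqrt_eq_one]
  constructor
  · rintro ⟨x, hx, rfl⟩
    exact ⟨WithLp.toLp 2 x, hx, rfl⟩
  · rintro ⟨v, hv, rfl⟩
    exact ⟨v.ofLp, hv, rfl⟩

lemma det_le_l2_opNorm_sq (F : Mat2) : F.det ≤ ‖F‖ ^ 2 := by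
  set col : Fin 2 → EuclideanSpace ℝ (Fin 2) := fun j => WithLp.toLp 2 (F.col j)
  have hcol : ∀ j, ‖col j‖ ≤ ‖F‖ := fun j => by
    simpa [col] using F.l2_opNorm_mulVec (EuclideanSpace.single j 1)
  have hcol_sq : ∀ j, ‖col j‖ ^ 2 = F 0 j ^ 2 + F 1 j ^ 2 := fun j => by
    simp [col, EuclideanSpace.real_norm_sq_eq, Fin.sum_univ_two]
  have hadamard : F.det ≤ ‖col 0‖ * ‖col 1‖ := by
    refine le_of_sq_le_sq ?_ (by positivity)
    rw [mul_pow, hcol_sq, hcol_sq, det_fin_two]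
    nlinarith [sq_nonneg (F 0 0 * F 0 1 + F 1 0 * F 1 1)]
  calc F.det ≤ ‖col 0‖ * ‖col 1‖ := hadamard
    _ ≤ ‖F‖ * ‖F‖ := by gcongr <;> exact hcol _
    _ = ‖F‖ ^ 2 := (sq _).symm

/-- If `W F = h(‖F‖_op²/det F)` on GL⁺(2) for some non-decreasing
convex `h : [1,∞) → ℝ`, then `W` is polyconvex. -/
theorem polyconvex_of_monotone_convex_of_opNormSq_div_det (W : Mat2 → ℝ) (h : ℝ → ℝ)
    (hh_mono : MonotoneOn h (Set.Ici (1:ℝ)))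
    (hh_conv : ConvexOn ℝ (Set.Ici (1:ℝ)) h)
    (hWh : ∀ F : Mat2, 0 < F.det → W F = h ((opNorm2 F) ^ 2 / F.det)) :
    Polyconvex W := by
  have hP : ConvexOn ℝ (univ ×ˢ Ioi 0) fun p : Mat2 × ℝ => h (max 1 (‖p.1‖ ^ 2 / p.2)) :=
    (convexOn_comp_max_of_monotoneOn hh_mono hh_conv).monotone_comp
      (monotone_comp_max_of_monotoneOn hh_mono)
      ((convexOn_norm convex_univ).sq_div fun _ _ => norm_nonneg _)
  refine ⟨extendByTop _ _, fun x y a b ha hb hab => hP.extendByTop_le x y ha hb hab,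
    fun F hF => ?_⟩
  rw [extendByTop_of_mem (by simpa using hF), hWh F hF, opNorm2_eq_l2_opNorm,
    max_eq_right ((one_le_div hF).2 (det_le_l2_opNorm_sq F))]
end
end

section
/- Let W : GL⁺(2) → ℝ be objective, isotropic and isochoric. Then W is polyconvex if and only if W is rank-one convex. -/
/-!
Along a rank-one line `t ↦ F + t • ξ ηᵀ` the determinant is affine, so any convex function of
`(F, det F)` is rank-one convex.

Conversely, write `F = R(α) diag(σ₁, σ₂) R(β)` with `σ₁ ≥ σ₂ > 0` (singular value decomposition).
Objectivity, isotropy and isochoricity give `W F = h (σ₁ / σ₂)` with `h t = W (diag(t, 1))`.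
Rank-one convexity along diagonal matrices makes `h` convex on `(0, ∞)`, and since `h (1 / t) = h t`
it is nondecreasing on `[1, ∞)`, so at `t₀ = σ₁ / σ₂` it has a subgradient `s ≥ 0`. For `F` with
singular values `x₁ ≥ x₂`, the bounds `(R(-α) F R(-β))₀₀ ≤ x₁` and
`x₁ / x₂ ≥ 2 x₁ / σ₂ - x₁ x₂ / σ₂²` (equality at `x₂ = σ₂`) then show that
`h t₀ + s (2 (R(-α) F R(-β))₀₀ / σ₂ - det F / σ₂² - t₀)`, an affine function of `(F, det F)`,
lies below `W` and touches it at `R(α) diag(σ₁, σ₂) R(β)`. The supremum of these affine minorants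
is a convex function of `(F, det F)` representing `W`.
-/

open Matrix Set

noncomputable section

lemma det_add_smul_vecMulVec_fin_two {R : Type*} [CommRing R] (F : Matrix (Fin 2) (Fin 2) R)
    (ξ η : Fin 2 → R) (t : R) :
    (F + t • vecMulVec ξ η).det = F.det + t * ((F + vecMulVec ξ η).det - F.det) := by
  simp only [det_fin_two, Matrix.add_apply, Matrix.smul_apply, vecMulVec_apply, smul_eq_mul]
  ring

lemma rankOneConvex_of_polyconvex {W : Mat2 → ℝ} (hW : Polyconvex W) : RankOneConvex W := by
  rintro F hF ξ η θ ⟨hθ₀, hθ₁⟩ hline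
  obtain ⟨P, hP, hWP⟩ := hW
  have hend : 0 < (F + vecMulVec ξ η).det := by simpa using hline 1 ⟨zero_le_one, le_rfl⟩
  have hmid : 0 < (F + (1 - θ) • vecMulVec ξ η).det := hline (1 - θ) ⟨by linarith, by linarith⟩
  have hcombo : θ • ((F, F.det) : Mat2 × ℝ)
      + (1 - θ) • (F + vecMulVec ξ η, (F + vecMulVec ξ η).det)
      = (F + (1 - θ) • vecMulVec ξ η, (F + (1 - θ) • vecMulVec ξ η).det) := by
    refine Prod.ext ?_ ?_
    · simp only [Prod.fst_add, Prod.smul_fst, smul_add, ← add_assoc, ← add_smul]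
      simp
    · simp only [Prod.snd_add, Prod.smul_snd, smul_eq_mul, det_add_smul_vecMulVec_fin_two]
      ring
  have key := hP (F, F.det) (F + vecMulVec ξ η, (F + vecMulVec ξ η).det) θ (1 - θ) hθ₀
    (by linarith) (by ring)
  rw [hcombo, ← hWP _ hmid, ← hWP _ hF, ← hWP _ hend, ← EReal.coe_mul, ← EReal.coe_mul,
    ← EReal.coe_add, EReal.coe_le_coe_iff] at key
  exact key

lemma EReal.iSup_coe_smul_add_smul_le {ι E : Type*} [AddCommGroup E] [Module ℝ E]
    {f : ι → E → ℝ} (hf : ∀ i, ConvexOn ℝ univ (f i)) (x y : E) {a b : ℝ} (ha : 0 ≤ a)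
    (hb : 0 ≤ b) (hab : a + b = 1) :
    ⨆ i, (f i (a • x + b • y) : EReal)
      ≤ a * (⨆ i, (f i x : EReal)) + b * ⨆ i, (f i y : EReal) := by
  refine iSup_le fun i => ?_
  calc (f i (a • x + b • y) : EReal) ≤ ((a * f i x + b * f i y : ℝ) : EReal) :=
        EReal.coe_le_coe_iff.2 ((hf i).2 trivial trivial ha hb hab)
    _ = a * (f i x : EReal) + b * (f i y : EReal) := by norm_cast
    _ ≤ a * (⨆ i, (f i x : EReal)) + b * ⨆ i, (f i y : EReal) :=
        add_le_add (mul_le_mul_of_nonneg_left (le_iSup (fun i => (f i x : EReal)) i)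
          (EReal.coe_nonneg.2 ha))
          (mul_le_mul_of_nonneg_left (le_iSup (fun i => (f i y : EReal)) i) (EReal.coe_nonneg.2 hb))

lemma polyconvex_of_forall_exists_minorant {W : Mat2 → ℝ}
    (h : ∀ F₀ : Mat2, 0 < F₀.det → ∃ ℓ : Mat2 × ℝ → ℝ, ConvexOn ℝ univ ℓ ∧
      (∀ F : Mat2, 0 < F.det → ℓ (F, F.det) ≤ W F) ∧ ℓ (F₀, F₀.det) = W F₀) :
    Polyconvex W := by
  choose ℓ hconv hle heq using h
  refine ⟨fun x => ⨆ G : {G : Mat2 // 0 < G.det}, (ℓ G.1 G.2 x : EReal),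
    fun x y a b ha hb hab => EReal.iSup_coe_smul_add_smul_le
      (fun G : {G : Mat2 // 0 < G.det} => hconv G.1 G.2) x y ha hb hab,
    fun F hF => le_antisymm ?_ (iSup_le fun G => EReal.coe_le_coe_iff.2 (hle G.1 G.2 F hF))⟩
  rw [← heq F hF]
  exact le_iSup (fun G : {G : Mat2 // 0 < G.det} => (ℓ G.1 G.2 (F, F.det) : EReal)) ⟨F, hF⟩

def rot (θ : ℝ) : Mat2 := !![Real.cos θ, -Real.sin θ; Real.sin θ, Real.cos θ]

lemma rot_mem_SO2 (θ : ℝ) : rot θ ∈ SO2 := by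
  have h := Real.sin_sq_add_cos_sq θ
  refine ⟨?_, ?_⟩
  · ext i j
    fin_cases i <;> fin_cases j <;> simp [rot, mul_apply, Fin.sum_univ_two] <;> nlinarith
  · simp only [rot, det_fin_two_of]
    nlinarith

lemma rot_mul_rot (α β : ℝ) : rot α * rot β = rot (α + β) := by
  ext i j
  fin_cases i <;> fin_cases j <;>
    simp [rot, mul_apply, Fin.sum_univ_two, Real.cos_add, Real.sin_add] <;> ring

lemma rot_mul_rot_mul_mul_rot_mul_rot (a b c d : ℝ) (M : Mat2) :
    rot a * (rot b * M * rot c) * rot d = rot (a + b) * M * rot (c + d) := by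
  simp only [← rot_mul_rot, Matrix.mul_assoc]

lemma exists_eq_mul_cos_and_eq_mul_sin (x y : ℝ) :
    ∃ r α : ℝ, 0 ≤ r ∧ x = r * Real.cos α ∧ y = r * Real.sin α :=
  ⟨‖(⟨x, y⟩ : ℂ)‖, Complex.arg ⟨x, y⟩, norm_nonneg _, (Complex.norm_mul_cos_arg ⟨x, y⟩).symm,
    (Complex.norm_mul_sin_arg ⟨x, y⟩).symm⟩

lemma exists_rot_mul_diag2_mul_rot {F : Mat2} (hF : 0 < F.det) :
    ∃ α β σ₁ σ₂ : ℝ, 0 < σ₂ ∧ σ₂ ≤ σ₁ ∧ F = rot α * diag2 σ₁ σ₂ * rot β := by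
  obtain ⟨ρ₁, α', hρ₁, hp, hq⟩ :=
    exists_eq_mul_cos_and_eq_mul_sin (F 0 0 + F 1 1) (F 1 0 - F 0 1)
  obtain ⟨ρ₂, γ, hρ₂, hu, hv⟩ :=
    exists_eq_mul_cos_and_eq_mul_sin (F 0 0 - F 1 1) (F 0 1 + F 1 0)
  obtain ⟨α, β, rfl, rfl⟩ : ∃ α β : ℝ, α' = α + β ∧ γ = α - β :=
    ⟨(α' + γ) / 2, (α' - γ) / 2, by ring, by ring⟩
  have hdet : ρ₁ ^ 2 - ρ₂ ^ 2 = 4 * F.det := by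
    rw [det_fin_two]
    linear_combination (-(F 0 0 + F 1 1) - ρ₁ * Real.cos (α + β)) * hp
      + (-(F 1 0 - F 0 1) - ρ₁ * Real.sin (α + β)) * hq
      + ((F 0 0 - F 1 1) + ρ₂ * Real.cos (α - β)) * hu
      + ((F 0 1 + F 1 0) + ρ₂ * Real.sin (α - β)) * hv
      - ρ₁ ^ 2 * Real.sin_sq_add_cos_sq (α + β) + ρ₂ ^ 2 * Real.sin_sq_add_cos_sq (α - β)
  refine ⟨α, β, (ρ₁ + ρ₂) / 2, (ρ₁ - ρ₂) / 2, by nlinarith, by linarith, ?_⟩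
  simp only [Real.cos_add, Real.sin_add, Real.cos_sub, Real.sin_sub] at hp hq hu hv
  ext i j
  fin_cases i <;> fin_cases j <;>
    simp [rot, diag2, mul_apply, Fin.sum_univ_two] <;> linarith

lemma det_diag2 (a b : ℝ) : (diag2 a b).det = a * b := by
  simp [diag2, det_fin_two]

lemma det_rot_mul_diag2_mul_rot (α β σ₁ σ₂ : ℝ) :
    (rot α * diag2 σ₁ σ₂ * rot β).det = σ₁ * σ₂ := by
  rw [det_mul, det_mul, (rot_mem_SO2 α).2, (rot_mem_SO2 β).2, det_diag2, one_mul, mul_one]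

lemma rot_mul_diag2_mul_rot_apply_zero_zero_le (α β : ℝ) {σ₁ σ₂ : ℝ} (h₂ : 0 ≤ σ₂)
    (h₁₂ : σ₂ ≤ σ₁) : (rot α * diag2 σ₁ σ₂ * rot β) 0 0 ≤ σ₁ := by
  have hsum := Real.cos_le_one (α + β)
  have hdiff := Real.cos_le_one (α - β)
  rw [Real.cos_add] at hsum
  rw [Real.cos_sub] at hdiff
  simp [rot, diag2, mul_apply, Fin.sum_univ_two]
  nlinarith

def profile (W : Mat2 → ℝ) (t : ℝ) : ℝ := W (diag2 t 1)

lemma ObjectiveIsotropic.apply_rot_mul_mul_rot {W : Mat2 → ℝ} (hW : ObjectiveIsotropic W)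
    {F : Mat2} (hF : 0 < F.det) (α β : ℝ) : W (rot α * F * rot β) = W F :=
  hW F hF _ _ (rot_mem_SO2 α) (rot_mem_SO2 β)

lemma Isochoric.apply_diag2 {W : Mat2 → ℝ} (hW : Isochoric W) {σ₁ σ₂ : ℝ} (h₁ : 0 < σ₁)
    (h₂ : 0 < σ₂) : W (diag2 σ₁ σ₂) = profile W (σ₁ / σ₂) := by
  have hscale : σ₂ • diag2 (σ₁ / σ₂) 1 = diag2 σ₁ σ₂ := by
    ext i j
    fin_cases i <;> fin_cases j <;> simp [diag2, mul_div_cancel₀ _ h₂.ne']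
  rw [← hscale, hW _ (by rw [det_diag2]; positivity) σ₂ h₂, profile]

lemma apply_rot_mul_diag2_mul_rot {W : Mat2 → ℝ} (hOI : ObjectiveIsotropic W)
    (hIso : Isochoric W) (α β : ℝ) {σ₁ σ₂ : ℝ} (h₁ : 0 < σ₁) (h₂ : 0 < σ₂) :
    W (rot α * diag2 σ₁ σ₂ * rot β) = profile W (σ₁ / σ₂) := by
  rw [hOI.apply_rot_mul_mul_rot (by rw [det_diag2]; positivity), hIso.apply_diag2 h₁ h₂]

lemma profile_inv {W : Mat2 → ℝ} (hOI : ObjectiveIsotropic W) (hIso : Isochoric W) {t : ℝ}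
    (ht : 0 < t) : profile W t⁻¹ = profile W t := by
  have hswap : rot (Real.pi / 2) * diag2 t 1 * rot (-(Real.pi / 2)) = diag2 1 t := by
    ext i j
    fin_cases i <;> fin_cases j <;> simp [rot, diag2, mul_apply, Fin.sum_univ_two]
  calc profile W t⁻¹ = W (diag2 1 t) := by rw [hIso.apply_diag2 one_pos ht, one_div]
    _ = W (rot (Real.pi / 2) * diag2 t 1 * rot (-(Real.pi / 2))) := by rw [hswap]
    _ = profile W t := by rw [apply_rot_mul_diag2_mul_rot hOI hIso _ _ ht one_pos, div_one]

lemma RankOneConvex.convexOn_profile {W : Mat2 → ℝ} (hW : RankOneConvex W) :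
    ConvexOn ℝ (Ioi 0) (profile W) := by
  refine ⟨convex_Ioi 0, fun x (hx : 0 < x) y (hy : 0 < y) a b ha hb hab => ?_⟩
  have hline : ∀ t : ℝ,
      diag2 x 1 + t • vecMulVec ![1, 0] ![y - x, 0] = diag2 (x + t * (y - x)) 1 := by
    intro t
    ext i j
    fin_cases i <;> fin_cases j <;> simp [diag2]
  have key := hW (diag2 x 1) (by rw [det_diag2]; linarith) ![1, 0] ![y - x, 0] a ⟨ha, by linarith⟩
    (fun t ⟨ht₀, ht₁⟩ => by
      rw [hline, det_diag2]
      rcases le_total x y with hxy | hxy <;> nlinarith)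
  rw [hline, ← one_smul ℝ (vecMulVec _ _), hline] at key
  obtain rfl : b = 1 - a := by linarith
  rwa [show x + (1 - a) * (y - x) = a * x + (1 - a) * y by ring, show x + 1 * (y - x) = y by ring]
    at key

lemma isMinOn_profile_one {W : Mat2 → ℝ} (hOI : ObjectiveIsotropic W) (hIso : Isochoric W)
    (hR : RankOneConvex W) : IsMinOn (profile W) (Ioi 0) 1 := by
  intro t (ht : 0 < t)
  have key := hR.convexOn_profile.2 (inv_pos.2 ht) ht (show 0 ≤ t / (t + 1) by positivity)
    (show 0 ≤ 1 / (t + 1) by positivity) (by field_simp)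
  rwa [profile_inv hOI hIso ht, ← add_smul, show t / (t + 1) + 1 / (t + 1) = 1 by field_simp,
    one_smul, smul_eq_mul, smul_eq_mul, show t / (t + 1) * t⁻¹ + 1 / (t + 1) * t = 1 by
      field_simp; ring] at key

lemma monotoneOn_profile {W : Mat2 → ℝ} (hOI : ObjectiveIsotropic W) (hIso : Isochoric W)
    (hR : RankOneConvex W) : MonotoneOn (profile W) (Ici 1) := by
  intro p (hp : 1 ≤ p) q (hq : 1 ≤ q) hpq
  have hmin := isMinOn_profile_one hOI hIso hR
  rcases hp.eq_or_lt with rfl | hp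
  · exact hmin (show (0 : ℝ) < q by linarith)
  · exact hR.convexOn_profile.le_right_of_left_le'' (mem_Ioi.2 one_pos)
      (show (0 : ℝ) < q by linarith) hp hpq (hmin (show (0 : ℝ) < p by linarith))

lemma ConvexOn.add_rightDeriv_mul_sub_le {S : Set ℝ} {f : ℝ → ℝ} (hf : ConvexOn ℝ S f) {x y : ℝ}
    (hx : x ∈ interior S) (hy : y ∈ S) : f x + derivWithin f (Ioi x) x * (y - x) ≤ f y := by
  rcases lt_trichotomy x y with hxy | rfl | hyx
  · have h := hf.rightDeriv_le_slope_of_mem_interior hx hy hxy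
    rw [slope_def_field, le_div_iff₀ (sub_pos.2 hxy)] at h
    linarith
  · simp
  · have h := (hf.slope_le_leftDeriv_of_mem_interior hy hx hyx).trans
      (hf.leftDeriv_le_rightDeriv_of_mem_interior hx)
    rw [slope_def_field, div_le_iff₀ (sub_pos.2 hyx)] at h
    linarith

lemma two_mul_div_sub_mul_div_sq_le_div {x₁ x₂ σ : ℝ} (hx₁ : 0 ≤ x₁) (hx₂ : 0 < x₂)
    (hσ : σ ≠ 0) : 2 * x₁ / σ - x₁ * x₂ / σ ^ 2 ≤ x₁ / x₂ := by
  have h : x₁ / x₂ - (2 * x₁ / σ - x₁ * x₂ / σ ^ 2) = x₁ * (σ - x₂) ^ 2 / (x₂ * σ ^ 2) := by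
    field_simp
    ring
  nlinarith [show 0 ≤ x₁ * (σ - x₂) ^ 2 / (x₂ * σ ^ 2) by positivity]

lemma exists_nonneg_subgradient_profile {W : Mat2 → ℝ} (hOI : ObjectiveIsotropic W)
    (hIso : Isochoric W) (hR : RankOneConvex W) {t₀ : ℝ} (ht₀ : 1 ≤ t₀) :
    ∃ s, 0 ≤ s ∧ ∀ t, 0 < t → profile W t₀ + s * (t - t₀) ≤ profile W t :=
  ⟨derivWithin (profile W) (Ioi t₀) t₀,
    ((monotoneOn_profile hOI hIso hR).mono fun _ ht => ht₀.trans (le_of_lt ht)).derivWithin_nonneg,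
    fun _ ht => hR.convexOn_profile.add_rightDeriv_mul_sub_le
      (by rw [interior_Ioi]; exact mem_Ioi.2 (by linarith)) ht⟩

lemma exists_minorant_of_rankOneConvex {W : Mat2 → ℝ} (hOI : ObjectiveIsotropic W)
    (hIso : Isochoric W) (hR : RankOneConvex W) {F₀ : Mat2} (hF₀ : 0 < F₀.det) :
    ∃ ℓ : Mat2 × ℝ → ℝ, ConvexOn ℝ univ ℓ ∧
      (∀ F : Mat2, 0 < F.det → ℓ (F, F.det) ≤ W F) ∧ ℓ (F₀, F₀.det) = W F₀ := by
  obtain ⟨α, β, σ₁, σ₂, hσ₂, hσ, rfl⟩ := exists_rot_mul_diag2_mul_rot hF₀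
  have hσ₁ : 0 < σ₁ := hσ₂.trans_le hσ
  have ht₀ : 1 ≤ σ₁ / σ₂ := (one_le_div hσ₂).2 hσ
  obtain ⟨s, hs, hsub⟩ := exists_nonneg_subgradient_profile hOI hIso hR ht₀
  set ℓ₀ : Mat2 → ℝ := fun F => (rot (-α) * F * rot (-β)) 0 0
  refine ⟨fun x => profile W (σ₁ / σ₂) + s * (2 * ℓ₀ x.1 / σ₂ - x.2 / σ₂ ^ 2 - σ₁ / σ₂),
    ?_, ?_, ?_⟩
  · refine ⟨convex_univ, fun x _ y _ a b _ _ hab => le_of_eq ?_⟩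
    simp only [ℓ₀, Prod.fst_add, Prod.smul_fst, Prod.snd_add, Prod.smul_snd, Matrix.mul_add,
      Matrix.add_mul, Matrix.mul_smul, Matrix.smul_mul, Matrix.add_apply, Matrix.smul_apply,
      smul_eq_mul]
    linear_combination (s * (σ₁ / σ₂) - profile W (σ₁ / σ₂)) * hab
  · intro F hF
    obtain ⟨φ, ψ, x₁, x₂, hx₂, hx, rfl⟩ := exists_rot_mul_diag2_mul_rot hF
    have hx₁ : 0 < x₁ := hx₂.trans_le hx
    have hℓ₀ : ℓ₀ (rot φ * diag2 x₁ x₂ * rot ψ) ≤ x₁ := by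
      simp only [ℓ₀, rot_mul_rot_mul_mul_rot_mul_rot]
      exact rot_mul_diag2_mul_rot_apply_zero_zero_le _ _ hx₂.le hx
    rw [apply_rot_mul_diag2_mul_rot hOI hIso φ ψ hx₁ hx₂, det_rot_mul_diag2_mul_rot]
    calc profile W (σ₁ / σ₂) + s * (2 * ℓ₀ _ / σ₂ - x₁ * x₂ / σ₂ ^ 2 - σ₁ / σ₂)
        ≤ profile W (σ₁ / σ₂) + s * (x₁ / x₂ - σ₁ / σ₂) := by
          gcongr
          exact (sub_le_sub_right (div_le_div_of_nonneg_right (by linarith) hσ₂.le) _).trans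
            (two_mul_div_sub_mul_div_sq_le_div hx₁.le hx₂ hσ₂.ne')
      _ ≤ profile W (x₁ / x₂) := hsub _ (by positivity)
  · have hℓ₀ : ℓ₀ (rot α * diag2 σ₁ σ₂ * rot β) = σ₁ := by
      simp only [ℓ₀, rot_mul_rot_mul_mul_rot_mul_rot, neg_add_cancel, add_neg_cancel]
      simp [rot, diag2]
    dsimp only
    rw [hℓ₀, det_rot_mul_diag2_mul_rot, apply_rot_mul_diag2_mul_rot hOI hIso α β hσ₁ hσ₂,
      show 2 * σ₁ / σ₂ - σ₁ * σ₂ / σ₂ ^ 2 - σ₁ / σ₂ = 0 by field_simp; ring, mul_zero, add_zero]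

/-- for objective, isotropic and isochoric `W : GL⁺(2) → ℝ`,
polyconvexity and rank-one convexity are equivalent. -/
theorem isochoric_polyconvex_iff_rankOneConvex (W : Mat2 → ℝ)
    (hOI : ObjectiveIsotropic W) (hIso : Isochoric W) :
    Polyconvex W ↔ RankOneConvex W :=
  ⟨rankOneConvex_of_polyconvex, fun hR => polyconvex_of_forall_exists_minorant fun _ hF₀ =>
    exists_minorant_of_rankOneConvex hOI hIso hR hF₀⟩
end
end

section
/- Every objective, isotropic and isochoric function W : GL⁺(2) → ℝ satisfies the tension-compression symmetry condition W(F⁻¹) = W(F) for all F ∈ GL⁺(2). -/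
open Matrix Set

noncomputable section

/-! For a 2×2 matrix, `F⁻¹ = (det F)⁻¹ • J Fᵀ Jᵀ` with `J` the quarter turn, so isochoric and
bi-rotational invariance give `W F⁻¹ = W Fᵀ`. Finally `Fᵀ = R F R` for a rotation `R` coming from
the polar decomposition of `F`, whence `W Fᵀ = W F`. -/

def rotMat (c s : ℝ) : Mat2 := !![c, -s; s, c]

lemma rotMat_transpose (c s : ℝ) : (rotMat c s)ᵀ = rotMat c (-s) := by
  rw [rotMat, rotMat, neg_neg]
  ext i j; fin_cases i <;> fin_cases j <;> rfl

lemma rotMat_mem_SO2 {c s : ℝ} (h : c ^ 2 + s ^ 2 = 1) : rotMat c s ∈ SO2 := by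
  refine ⟨?_, ?_⟩
  · rw [rotMat_transpose, rotMat, rotMat, mul_fin_two, one_fin_two]
    refine congrArg of (vec2_eq (vec2_eq ?_ ?_) (vec2_eq ?_ ?_))
    · linear_combination h
    · ring
    · ring
    · linear_combination h
  · rw [rotMat, det_fin_two_of]; linear_combination h

lemma det_mul_mul_of_mem_SO2 {Q₁ Q₂ : Mat2} (h₁ : Q₁ ∈ SO2) (h₂ : Q₂ ∈ SO2) (F : Mat2) :
    (Q₁ * F * Q₂).det = F.det := by
  rw [det_mul, det_mul, h₁.2, h₂.2, one_mul, mul_one]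

lemma exists_cos_sin_mul_eq (x y : ℝ) : ∃ c s : ℝ, c ^ 2 + s ^ 2 = 1 ∧ s * x = c * y := by
  set z : ℂ := ⟨x, y⟩
  refine ⟨Real.cos z.arg, Real.sin z.arg, Real.cos_sq_add_sin_sq _, ?_⟩
  have hx : ‖z‖ * Real.cos z.arg = x := Complex.norm_mul_cos_arg z
  have hy : ‖z‖ * Real.sin z.arg = y := Complex.norm_mul_sin_arg z
  rw [← hx, ← hy]
  ring

/-- Writing `F = Q U` with `Q` a rotation and `U` symmetric gives `Fᵀ = U Qᵀ = Qᵀ F Qᵀ`;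
`R = Qᵀ` is the rotation that makes `R F` symmetric, which is what `hrel` says. -/
lemma exists_mem_SO2_mul_mul_eq_transpose (F : Mat2) : ∃ R ∈ SO2, R * F * R = Fᵀ := by
  obtain ⟨c, s, hcs, hrel⟩ := exists_cos_sin_mul_eq (F 0 0 + F 1 1) (F 0 1 - F 1 0)
  refine ⟨rotMat c s, rotMat_mem_SO2 hcs, ?_⟩
  rw [eta_fin_two Fᵀ]
  conv_lhs => rw [eta_fin_two F, rotMat, mul_fin_two, mul_fin_two]
  refine congrArg of (vec2_eq (vec2_eq ?_ ?_) (vec2_eq ?_ ?_)) <;> rw [transpose_apply]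
  · linear_combination F 0 0 * hcs - s * hrel
  · linear_combination F 1 0 * hcs - c * hrel
  · linear_combination F 0 1 * hcs + c * hrel
  · linear_combination F 1 1 * hcs - s * hrel

lemma adjugate_eq_rotMat_mul_transpose_mul (F : Mat2) :
    F.adjugate = rotMat 0 1 * Fᵀ * (rotMat 0 1)ᵀ := by
  rw [adjugate_fin_two, rotMat_transpose, rotMat, rotMat, eta_fin_two Fᵀ, mul_fin_two, mul_fin_two]
  refine congrArg of (vec2_eq (vec2_eq ?_ ?_) (vec2_eq ?_ ?_)) <;> simp

lemma inv_eq_smul_rotMat_mul_transpose_mul (F : Mat2) :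
    F⁻¹ = F.det⁻¹ • (rotMat 0 1 * Fᵀ * (rotMat 0 1)ᵀ) := by
  rw [inv_def, Ring.inverse_eq_inv', adjugate_eq_rotMat_mul_transpose_mul]

lemma ObjectiveIsotropic.apply_transpose {W : Mat2 → ℝ} (hW : ObjectiveIsotropic W)
    {F : Mat2} (hF : 0 < F.det) : W Fᵀ = W F := by
  obtain ⟨R, hR, hRF⟩ := exists_mem_SO2_mul_mul_eq_transpose F
  rw [← hRF, hW F hF R R hR hR]

/-- every objective, isotropic and isochoric `W : GL⁺(2) → ℝ` is
tension-compression symmetric: `W(F⁻¹) = W(F)`. -/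
theorem isochoric_tension_compression_symmetry (W : Mat2 → ℝ)
    (hOI : ObjectiveIsotropic W) (hIso : Isochoric W) :
    ∀ F : Mat2, 0 < F.det → W F⁻¹ = W F := by
  intro F hF
  have hJ : rotMat 0 1 ∈ SO2 := rotMat_mem_SO2 (by norm_num)
  have hJT : (rotMat 0 1)ᵀ ∈ SO2 := by rw [rotMat_transpose]; exact rotMat_mem_SO2 (by norm_num)
  have hFT : 0 < Fᵀ.det := by rwa [det_transpose]
  have hJFJ : 0 < (rotMat 0 1 * Fᵀ * (rotMat 0 1)ᵀ).det := by
    rwa [det_mul_mul_of_mem_SO2 hJ hJT]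
  calc W F⁻¹ = W (F.det⁻¹ • (rotMat 0 1 * Fᵀ * (rotMat 0 1)ᵀ)) := by
        rw [inv_eq_smul_rotMat_mul_transpose_mul]
    _ = W (rotMat 0 1 * Fᵀ * (rotMat 0 1)ᵀ) := hIso _ hJFJ _ (inv_pos.mpr hF)
    _ = W Fᵀ := hOI _ hFT _ _ hJ hJT
    _ = W F := hOI.apply_transpose hF
end
end
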